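/- Let M be a commutative idempotent monoid acting additively on an abelian group G, F : M → G a function satisfying the chain rule, and X_1, …, X_n ∈ M. Let q ≥ 1 and let L_1, …, L_q ⊆ [n] be pairwise disjoint subsets. Then for every nonempty I ⊆ [q]: F(;_{i∈I} X_{L_i}) = Σ over all families (W_i)_{i∈I} with ∅ ≠ W_i ⊆ L_i for each i ∈ I of X_{L_I ∖ W_I}.F(;_{w∈W_I} X_w), where L_I = ⋃_{i∈I} L_i and W_I = ⋃_{i∈I} W_i. -/

import Mathlib

/-!
As `I` grows by one block `m`, both sides obey the recursion `F(;S, Y) = F(;S) - Y.F(;S)` of the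
higher-order terms; appending `Y = X_{L_m}` as the last argument is harmless because the chain
rule and commutativity make `F_q` symmetric. On the right-hand side the recursion comes from
expanding `1 = ∏_{t ∈ T} (X_t + (1 - X_t))`, which gives
`F(;S) - X_T.F(;S) = Σ_{∅ ≠ V ⊆ T} X_{T ∖ V}.F(;S ∪ V)` for nonempty `S` disjoint from `T`;
the same expansion and the chain rule give the base case `F(X_T) = Σ_{∅ ≠ V ⊆ T} X_{T ∖ V}.F(;V)`.
-/

namespace AMRF
/-- An additive monoid action of a commutative monoid `M` on an abelian group `G`. -/
structure MAction (M G : Type*) [CommMonoid M] [AddCommGroup G] where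
  act : M → G → G
  act_one : ∀ g, act 1 g = g
  act_mul : ∀ X Y g, act X (act Y g) = act (X * Y) g
  act_add : ∀ X g h, act X (g + h) = act X g + act X h

variable {M G : Type*} [CommMonoid M] [AddCommGroup G]

/-- `F : M → G` satisfies the chain rule `F(XY) = F(X) + X.F(Y)`. -/
def ChainRule (A : MAction M G) (F : M → G) : Prop :=
  ∀ X Y : M, F (X * Y) = F X + A.act X (F Y)

/-- Higher-order terms on a *reversed* argument list: the head of the list is the *last*
argument `Y_q` in `F_q(Y₁; …; Y_q)`. -/
def Fseq (A : MAction M G) (F : M → G) : List M → G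
  | [] => 0
  | [Y] => F Y
  | Y :: Z :: l => Fseq A F (Z :: l) - A.act Y (Fseq A F (Z :: l))

/-- `Fof A F [Y₁, …, Y_q] = F_q(Y₁; …; Y_q)`, defined inductively by
`F_q(Y₁; …; Y_q) = F_{q−1}(Y₁; …; Y_{q−1}) − Y_q.F_{q−1}(Y₁; …; Y_{q−1})`. -/
def Fof (A : MAction M G) (F : M → G) (l : List M) : G :=
  Fseq A F l.reverse

/-- The interaction term `F(;_{i∈I} X_i)`, with arguments in increasing index order. -/
def Fint (A : MAction M G) (F : M → G) {ι : Type*} [LinearOrder ι] (X : ι → M)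
    (I : Finset ι) : G :=
  Fof A F ((I.sort (· ≤ ·)).map X)

/-- The `F`-independence relation: `X ⊥_F Y | Z` iff `Z.F(X; Y) = 0`, where
`F(X; Y) = F(X) − Y.F(X)` is the second-order term. -/
def Findep (A : MAction M G) (F : M → G) (X Y Z : M) : Prop :=
  A.act Z (F X - A.act Y (F X)) = 0

namespace MAction

variable (A : MAction M G)

def toAddMonoidHom (X : M) : G →+ G :=
  AddMonoidHom.mk' (A.act X) (A.act_add X)

lemma act_zero (X : M) : A.act X 0 = 0 :=
  (A.toAddMonoidHom X).map_zero

lemma act_sub (X : M) (g h : G) : A.act X (g - h) = A.act X g - A.act X h :=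
  (A.toAddMonoidHom X).map_sub g h

lemma act_sum (X : M) {α : Type*} (s : Finset α) (f : α → G) :
    A.act X (∑ a ∈ s, f a) = ∑ a ∈ s, A.act X (f a) :=
  map_sum (A.toAddMonoidHom X) f s

lemma act_comm (X Y : M) (g : G) : A.act X (A.act Y g) = A.act Y (A.act X g) := by
  rw [A.act_mul, A.act_mul, mul_comm]

end MAction

open MAction

section ChainRule

variable {A : MAction M G} {F : M → G}

lemma ChainRule.map_one (hF : ChainRule A F) : F 1 = 0 := by
  simpa [A.act_one] using hF 1 1

lemma ChainRule.sub_act_comm (hF : ChainRule A F) (X Y : M) :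
    F X - A.act Y (F X) = F Y - A.act X (F Y) := by
  have h := hF X Y
  rw [mul_comm, hF Y X] at h
  rw [sub_eq_sub_iff_add_eq_add, h]

end ChainRule

section HigherOrder

variable (A : MAction M G) (F : M → G)

lemma Fseq_cons (Y : M) {l : List M} (hl : l ≠ []) :
    Fseq A F (Y :: l) = Fseq A F l - A.act Y (Fseq A F l) := by
  cases l with
  | nil => exact absurd rfl hl
  | cons Z l => rfl

variable {A F}

lemma Fseq_perm (hF : ChainRule A F) {l l' : List M} (h : l.Perm l') :
    Fseq A F l = Fseq A F l' := by
  induction h with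
  | nil => rfl
  | @cons x l₁ l₂ p ih =>
    by_cases h₁ : l₁ = []
    · subst h₁
      rw [← p.nil_eq]
    · have h₂ : l₂ ≠ [] := by
        rintro rfl
        exact h₁ p.eq_nil
      rw [Fseq_cons A F x h₁, Fseq_cons A F x h₂, ih]
  | swap x y l =>
    cases l with
    | nil => exact hF.sub_act_comm x y
    | cons a t =>
      rw [Fseq_cons A F x (List.cons_ne_nil y _), Fseq_cons A F y (List.cons_ne_nil x _),
        Fseq_cons A F y (List.cons_ne_nil a t), Fseq_cons A F x (List.cons_ne_nil a t),
        act_sub, act_sub, act_comm A x y]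
      abel
  | trans _ _ ih₁ ih₂ => exact ih₁.trans ih₂

lemma Fof_perm (hF : ChainRule A F) {l l' : List M} (h : l.Perm l') : Fof A F l = Fof A F l' :=
  Fseq_perm hF ((l.reverse_perm.trans h).trans l'.reverse_perm.symm)

variable (A F)

lemma Fof_append_singleton (Y : M) {l : List M} (hl : l ≠ []) :
    Fof A F (l ++ [Y]) = Fof A F l - A.act Y (Fof A F l) := by
  rw [Fof, List.reverse_append, List.reverse_singleton, List.singleton_append]
  exact Fseq_cons A F Y (by simpa using hl)

variable {ι : Type*} [LinearOrder ι] (X : ι → M)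

@[simp]
lemma Fint_empty : Fint A F X ∅ = 0 := by
  simp [Fint, Fof, Fseq]

@[simp]
lemma Fint_singleton (a : ι) : Fint A F X {a} = F (X a) := by
  simp [Fint, Fof, Fseq]

variable {A F X}

lemma Fint_insert (hF : ChainRule A F) {S : Finset ι} {t : ι} (ht : t ∉ S) (hS : S.Nonempty) :
    Fint A F X (insert t S) = Fint A F X S - A.act (X t) (Fint A F X S) := by
  have hperm : ((insert t S).sort (· ≤ ·)).Perm (S.sort (· ≤ ·) ++ [t]) :=
    ((insert t S).sort_perm_toList _).trans <| (Finset.toList_insert ht).trans <|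
      (List.perm_append_singleton t _).symm.trans <|
        (S.sort_perm_toList _).symm.append_right [t]
  have hne : (S.sort (· ≤ ·)).map X ≠ [] := by
    simpa [← List.length_eq_zero_iff, Finset.length_sort] using hS.ne_empty
  rw [Fint, Fof_perm hF (hperm.map X), List.map_append, List.map_singleton,
    Fof_append_singleton A F (X t) hne, Fint]

lemma Fint_eq_sum_powerset (hF : ChainRule A F) {S T : Finset ι} (hS : S.Nonempty)
    (hST : Disjoint S T) :
    Fint A F X S = ∑ V ∈ T.powerset, A.act (∏ a ∈ T \ V, X a) (Fint A F X (S ∪ V)) := by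
  induction T using Finset.induction_on with
  | empty => simp [A.act_one]
  | @insert t T htT ih =>
    rw [Finset.disjoint_insert_right] at hST
    rw [Finset.sum_powerset_insert htT, ih hST.2, ← Finset.sum_add_distrib]
    refine Finset.sum_congr rfl fun V hV => ?_
    have htV : t ∉ V := fun h => htT (Finset.mem_powerset.mp hV h)
    have htSV : t ∉ S ∪ V := by simp [hST.1, htV]
    rw [Finset.insert_sdiff_of_notMem _ htV, Finset.insert_sdiff_insert,
      Finset.sdiff_insert_of_notMem htT, Finset.prod_insert (by simp [htT]),
      Finset.union_insert, Fint_insert hF htSV (hS.mono Finset.subset_union_left), act_sub,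
      ← A.act_mul, act_comm A (X t)]
    abel

lemma Fint_sub_act_prod (hF : ChainRule A F) {S T : Finset ι} (hS : S.Nonempty)
    (hST : Disjoint S T) :
    Fint A F X S - A.act (∏ a ∈ T, X a) (Fint A F X S) =
      ∑ V ∈ T.powerset.erase ∅, A.act (∏ a ∈ T \ V, X a) (Fint A F X (S ∪ V)) := by
  have h := Fint_eq_sum_powerset (X := X) hF hS hST
  rw [← Finset.add_sum_erase _ _ (Finset.empty_mem_powerset T), Finset.sdiff_empty,
    Finset.union_empty] at h
  rw [sub_eq_iff_eq_add', ← h]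

lemma ChainRule.map_prod (hF : ChainRule A F) (S : Finset ι) :
    F (∏ a ∈ S, X a) = ∑ W ∈ S.powerset, A.act (∏ a ∈ S \ W, X a) (Fint A F X W) := by
  induction S using Finset.induction_on with
  | empty => simp [hF.map_one, act_zero]
  | @insert s S hs ih =>
    have hsS : Disjoint {s} S := Finset.disjoint_singleton_left.mpr hs
    rw [Finset.prod_insert hs, hF, ih, act_sum, ← Fint_singleton A F X s,
      Fint_eq_sum_powerset hF (Finset.singleton_nonempty s) hsS, Finset.sum_powerset_insert hs,
      add_comm]
    congr 1
    · refine Finset.sum_congr rfl fun W hW => ?_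
      have hsW : s ∉ W := fun h => hs (Finset.mem_powerset.mp hW h)
      rw [Finset.insert_sdiff_of_notMem _ hsW, Finset.prod_insert (by simp [hs]), A.act_mul]
    · refine Finset.sum_congr rfl fun W _ => ?_
      rw [Finset.insert_sdiff_insert, Finset.sdiff_insert_of_notMem hs, Finset.singleton_union]

end HigherOrder

lemma biUnion_insert_update {κ ι : Type*} [DecidableEq κ] [DecidableEq ι] {I : Finset κ} {m : κ}
    (hm : m ∉ I) (W : κ → Finset ι) (V : Finset ι) :
    (insert m I).biUnion (Function.update W m V) = V ∪ I.biUnion W := by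
  rw [Finset.biUnion_insert, Function.update_self]
  congr 1
  exact Finset.biUnion_congr rfl fun i hi =>
    Function.update_of_ne (ne_of_mem_of_not_mem hi hm) V W

lemma union_sdiff_union_of_disjoint {α : Type*} [DecidableEq α] {s t u v : Finset α}
    (hsv : Disjoint s v) (htu : Disjoint t u) : (s ∪ t) \ (u ∪ v) = s \ u ∪ t \ v := by
  ext x
  have hsv : x ∈ s → x ∉ v := fun h => Finset.disjoint_left.mp hsv h
  have htu : x ∈ t → x ∉ u := fun h => Finset.disjoint_left.mp htu h
  simp only [Finset.mem_sdiff, Finset.mem_union]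
  tauto

section Families

variable {κ ι : Type*} [Fintype κ] [DecidableEq κ] [Fintype ι] [DecidableEq ι]

def blockFamilies (I : Finset κ) (L : κ → Finset ι) : Finset (κ → Finset ι) :=
  Finset.univ.filter fun W => ∀ i, (i ∈ I → W i ⊆ L i ∧ (W i).Nonempty) ∧ (i ∉ I → W i = ∅)

lemma mem_blockFamilies {I : Finset κ} {L : κ → Finset ι} {W : κ → Finset ι} :
    W ∈ blockFamilies I L ↔
      ∀ i, (i ∈ I → W i ⊆ L i ∧ (W i).Nonempty) ∧ (i ∉ I → W i = ∅) := by
  simp [blockFamilies]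

lemma blockFamilies_empty (L : κ → Finset ι) : blockFamilies ∅ L = {fun _ => ∅} := by
  ext W
  simp [mem_blockFamilies, funext_iff]

lemma sum_blockFamilies_insert {β : Type*} [AddCommMonoid β] {I : Finset κ} {m : κ} (hm : m ∉ I)
    (L : κ → Finset ι) (f : (κ → Finset ι) → β) :
    ∑ W ∈ blockFamilies (insert m I) L, f W =
      ∑ W ∈ blockFamilies I L, ∑ V ∈ (L m).powerset.erase ∅, f (Function.update W m V) := by
  rw [← Finset.sum_product']
  refine Finset.sum_nbij' (fun W => (Function.update W m ∅, W m))
    (fun p => Function.update p.1 m p.2) ?_ ?_ ?_ ?_ ?_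
  · intro W hW
    simp only [Finset.mem_product, mem_blockFamilies, Finset.mem_erase,
      Finset.mem_powerset, Finset.nonempty_iff_ne_empty, Finset.mem_insert] at hW ⊢
    refine ⟨fun i => ?_, ?_⟩
    · by_cases hi : i = m
      · subst hi
        simp [hm]
      · simpa [Function.update_of_ne hi, hi] using hW i
    · exact ((hW m).1 (Or.inl rfl)).symm
  · intro p hp
    simp only [Finset.mem_product, mem_blockFamilies, Finset.mem_erase,
      Finset.mem_powerset, Finset.nonempty_iff_ne_empty, Finset.mem_insert] at hp ⊢
    intro i
    by_cases hi : i = m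
    · subst hi
      simp [hp.2.1, hp.2.2]
    · simpa [Function.update_of_ne hi, hi] using hp.1 i
  · intro W _
    simp
  · intro p hp
    simp only [Finset.mem_product, mem_blockFamilies] at hp
    simp [← (hp.1 m).2 hm]
  · intro W _
    simp

end Families

section FamilySum

variable {κ ι : Type*} [Fintype κ] [DecidableEq κ] [Fintype ι] [LinearOrder ι]
  {A : MAction M G} {F : M → G} {X : ι → M} {L : κ → Finset ι}

variable (A F X) in
def familySum (I : Finset κ) (L : κ → Finset ι) : G :=
  ∑ W ∈ blockFamilies I L,
    A.act (∏ a ∈ I.biUnion L \ I.biUnion W, X a) (Fint A F X (I.biUnion W))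

lemma familySum_singleton (hF : ChainRule A F) (m : κ) :
    familySum A F X {m} L = F (∏ a ∈ L m, X a) := by
  rw [familySum, ← Finset.insert_empty, sum_blockFamilies_insert (Finset.notMem_empty m),
    blockFamilies_empty, Finset.sum_singleton, hF.map_prod]
  simp only [Finset.insert_empty, Finset.singleton_biUnion, Function.update_self]
  exact Finset.sum_erase _ (by rw [Fint_empty, act_zero])

lemma familySum_insert (hF : ChainRule A F) {I : Finset κ} {m : κ} (hm : m ∉ I)
    (hI : I.Nonempty) (hL : ∀ i ∈ I, Disjoint (L i) (L m)) :
    familySum A F X (insert m I) L =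
      familySum A F X I L - A.act (∏ a ∈ L m, X a) (familySum A F X I L) := by
  rw [familySum, familySum, sum_blockFamilies_insert hm, act_sum, ← Finset.sum_sub_distrib]
  refine Finset.sum_congr rfl fun W hW => ?_
  rw [mem_blockFamilies] at hW
  have hWL : I.biUnion W ⊆ I.biUnion L := Finset.biUnion_mono fun i hi => ((hW i).1 hi).1
  have hWne : (I.biUnion W).Nonempty := by
    obtain ⟨i, hi⟩ := hI
    exact ((hW i).1 hi).2.mono (Finset.subset_biUnion_of_mem W hi)
  have hLm : Disjoint (I.biUnion L) (L m) := (Finset.disjoint_biUnion_left _ _ _).mpr hL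
  rw [act_comm A (∏ a ∈ L m, X a), ← act_sub, Fint_sub_act_prod hF hWne (hLm.mono_left hWL),
    act_sum]
  refine Finset.sum_congr rfl fun V hV => ?_
  have hVm : V ⊆ L m := Finset.mem_powerset.mp (Finset.mem_of_mem_erase hV)
  rw [biUnion_insert_update hm, Finset.biUnion_insert,
    union_sdiff_union_of_disjoint (hLm.symm.mono_right hWL) (hLm.mono_right hVm),
    Finset.prod_union (hLm.symm.mono Finset.sdiff_subset Finset.sdiff_subset), ← A.act_mul,
    act_comm A, Finset.union_comm V]

end FamilySum

theorem interaction_sum_formula_general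
    {M G : Type*} [CommMonoid M] [AddCommGroup G]
    (A : MAction M G) (F : M → G) (hF : ChainRule A F)
    (n q : ℕ) (X : Fin n → M) (L : Fin q → Finset (Fin n))
    (hL : ∀ i j : Fin q, i ≠ j → Disjoint (L i) (L j))
    (I : Finset (Fin q)) (hI : I.Nonempty) :
    Fint A F (fun i => ∏ a ∈ L i, X a) I =
      ∑ W ∈ (Finset.univ : Finset (Fin q → Finset (Fin n))).filter
          (fun W => ∀ i : Fin q,
            (i ∈ I → W i ⊆ L i ∧ (W i).Nonempty) ∧ (i ∉ I → W i = ∅)),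
        A.act (∏ a ∈ I.biUnion L \ I.biUnion W, X a) (Fint A F X (I.biUnion W)) := by
  suffices Fint A F (fun i => ∏ a ∈ L i, X a) I = familySum A F X I L by
    rw [this, familySum, blockFamilies]
    congr!
  induction hI using Finset.Nonempty.cons_induction with
  | singleton m => rw [Fint_singleton, familySum_singleton hF]
  | cons m I hm hI ih =>
    rw [Finset.cons_eq_insert, Fint_insert hF hm hI, ih,
      familySum_insert hF hm hI fun i hi => hL i m (ne_of_mem_of_not_mem hi hm)]

/-- Let `L₁, …, L_q ⊆ [n]` be pairwise disjoint. Then for every nonempty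
`I ⊆ [q]`:
`F(;_{i∈I} X_{Lᵢ}) = Σ_{(Wᵢ)_{i∈I}, ∅ ≠ Wᵢ ⊆ Lᵢ} X_{L_I ∖ W_I}.F(;_{w∈W_I} X_w)`,
where the sum runs over all families `(Wᵢ)_{i∈I}` of nonempty subsets `Wᵢ ⊆ Lᵢ`
(encoded as functions `W : Fin q → Finset (Fin n)` vanishing off `I`),
`L_I = ⋃_{i∈I} Lᵢ` and `W_I = ⋃_{i∈I} Wᵢ`. -/
theorem interaction_sum_formula
    {M G : Type*} [CommMonoid M] [AddCommGroup G]
    (hidem : ∀ x : M, x * x = x)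
    (A : MAction M G) (F : M → G) (hF : ChainRule A F)
    (n q : ℕ) (hq : 1 ≤ q) (X : Fin n → M) (L : Fin q → Finset (Fin n))
    (hL : ∀ i j : Fin q, i ≠ j → Disjoint (L i) (L j))
    (I : Finset (Fin q)) (hI : I.Nonempty) :
    Fint A F (fun i => ∏ a ∈ L i, X a) I =
      ∑ W ∈ (Finset.univ : Finset (Fin q → Finset (Fin n))).filter
          (fun W => ∀ i : Fin q,
            (i ∈ I → W i ⊆ L i ∧ (W i).Nonempty) ∧ (i ∉ I → W i = ∅)),
        A.act (∏ a ∈ I.biUnion L \ I.biUnion W, X a) (Fint A F X (I.biUnion W)) :=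
  interaction_sum_formula_general A F hF n q X L hL I hI

end AMRF
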